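/- Local-complementation rule for σ_y measurements on graph states: let G be a finite simple graph on V and a ∈ V. For k ∈ {0,1}, define the projected amplitude φ_k : (V∖{a} → Bool) → ℂ by φ_k(y) := (1/√2)·( |G⟩(y extended by false at a) − (−1)^k · i · |G⟩(y extended by true at a) ), which is the overlap of |G⟩ with the σ_y eigenstate (|0⟩ + (−1)^k i |1⟩)/√2 on qubit a. Then there exists a complex number c with |c| = 1 (independent of y) such that for all y : V∖{a} → Bool, φ_k(y) = (c/√2) · (∏_{b ∈ N(a)} (1 − (−1)^k · i · (−1)^{y b})/√2) · |τ_a(G)−a⟩(y), where τ_a(G)−a is the local complement of G at a with the vertex a deleted. That is, a σ_y measurement on a qubit of a graph state produces, up to a global phase and the local diagonal unitary corrections u_{y,k} = (1 − (−1)^k i σ_z)/√2 on the neighbors of a, the graph state of the locally complemented graph with the measured vertex removed. -/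

import Mathlib

open scoped BigOperators Classical

noncomputable section

/-- The number `q_G(x)` of edges `{a,b}` of `G` with `x a = x b = true`. -/
def qCount {V : Type} [Fintype V] [DecidableEq V] (G : SimpleGraph V)
    (x : V → Bool) : ℕ :=
  (Finset.univ.filter fun e : Sym2 V => e ∈ G.edgeSet ∧ ∀ v ∈ e, x v = true).card

/-- The graph state of a finite simple graph `G` on the vertex set `V`:
`|G⟩(x) = 2^{−n/2} · (−1)^{q_G(x)}` where `n = |V|`. -/
def graphState {V : Type} [Fintype V] [DecidableEq V] (G : SimpleGraph V) :
    (V → Bool) → ℂ :=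
  fun x => (1 / (Real.sqrt (2 ^ Fintype.card V) : ℂ)) * (-1) ^ qCount G x

/-- The Pauli operator `σ_z` at qubit `a`: `(σ_z^{(a)} ψ)(x) = (−1)^{x a} ψ(x)`. -/
def sigmaZ {V : Type} (a : V) (ψ : (V → Bool) → ℂ) : (V → Bool) → ℂ :=
  fun x => (if x a then (-1 : ℂ) else 1) * ψ x

/-- The Pauli operator `σ_x` at qubit `a`:
`(σ_x^{(a)} ψ)(x) = ψ(x with the coordinate at a flipped)`. -/
def sigmaX {V : Type} [DecidableEq V] (a : V) (ψ : (V → Bool) → ℂ) :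
    (V → Bool) → ℂ :=
  fun x => ψ (Function.update x a (!x a))

/-- The product `∏_{b ∈ S} σ_z^{(b)}` of Pauli `σ_z` operators over a finite set
of qubits. -/
def sigmaZprod {V : Type} (S : Finset V) (ψ : (V → Bool) → ℂ) :
    (V → Bool) → ℂ :=
  fun x => (∏ b ∈ S, if x b then (-1 : ℂ) else 1) * ψ x

/-- The correlation operator `K_a := σ_x^{(a)} ∘ ∏_{b ∈ N(a)} σ_z^{(b)}` of the
graph `G` at the vertex `a`, where `N(a)` is the neighborhood of `a` in `G`. -/
def corrOp {V : Type} [Fintype V] [DecidableEq V] (G : SimpleGraph V) (a : V)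
    (ψ : (V → Bool) → ℂ) : (V → Bool) → ℂ :=
  sigmaX a (sigmaZprod (Finset.univ.filter fun b => G.Adj a b) ψ)

/-- Extension of an assignment `y : V∖{a} → Bool` by the value `k` at `a`. -/
def extendAt {V : Type} [DecidableEq V] (a : V) (k : Bool)
    (y : {v : V // v ≠ a} → Bool) : V → Bool :=
  fun v => if h : v = a then k else y ⟨v, h⟩

/-- The local complement `τ_a(G)` of a graph `G` at a vertex `a`: adjacency
between two distinct neighbors of `a` is toggled, all other adjacencies are
unchanged. -/
def localComp {V : Type} (G : SimpleGraph V) (a : V) : SimpleGraph V :=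
  SimpleGraph.fromRel fun b c =>
    if G.Adj a b ∧ G.Adj a c then ¬ G.Adj b c else G.Adj b c

/-- The sign `(−1)^k` for `k : Bool`, resp. `(−1)^{y b}` for a bit `y b`. -/
def bsign (k : Bool) : ℂ := if k then -1 else 1


private lemma signPow_eq_prod {α : Type} [Fintype α] (P : α → Prop) [DecidablePred P] :
    ((-1:ℂ)) ^ (Finset.univ.filter P).card = ∏ e : α, (if P e then (-1:ℂ) else 1) := by
  rw [Finset.prod_ite, Finset.prod_const, Finset.prod_const, one_pow, mul_one]

private lemma if_xor_eq {A B C : Prop} [Decidable A] [Decidable B] [Decidable C] (h : A ↔ Xor' B C) :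
    (if A then (-1:ℂ) else 1) = (if B then (-1:ℂ) else 1) * (if C then (-1:ℂ) else 1) := by
  by_cases hB : B <;> by_cases hC : C <;> simp_all [Xor']

private lemma key_ident (ε : ℂ) (hε : ε^2 = 1) (m : ℕ) :
    1 - ε*Complex.I*(-1)^m = (1 - ε*Complex.I) * (ε*Complex.I)^m * (-1)^(m.choose 2) := by
  induction m with
  | zero => simp
  | succ m ih =>
    have ht : ((-1:ℂ)^m)^2 = 1 := by
      rw [← pow_mul, mul_comm, pow_mul]; norm_num
    have hch : (m+1).choose 2 = m.choose 2 + m := by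
      rw [Nat.choose_succ_succ]; simp [Nat.choose_one_right, Nat.add_comm]
    rw [hch, pow_succ, pow_add, pow_succ]
    linear_combination (ε*Complex.I*((-1:ℂ)^m)) * ih + (Complex.I^2*((-1:ℂ)^m)^2) * hε
      + (((-1:ℂ)^m)^2) * Complex.I_sq - ht

set_option maxHeartbeats 2000000 in
/-- Local-complementation rule for `σ_y` measurements on graph states: the
projected amplitude
`φ_k(y) = (1/√2)·(|G⟩(y, a↦false) − (−1)^k i |G⟩(y, a↦true))`
(the overlap of `|G⟩` with the `σ_y` eigenstate `(|0⟩ + (−1)^k i |1⟩)/√2` on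
qubit `a`) equals, for some global phase `c` with `|c| = 1` independent of `y`,
`(c/√2) · ∏_{b ∈ N(a)} ((1 − (−1)^k i (−1)^{y b})/√2) · |τ_a(G)−a⟩(y)`,
where `τ_a(G)−a` is the local complement of `G` at `a` with `a` deleted: a `σ_y`
measurement produces, up to a global phase and the local corrections
`u_{y,k} = (1 − (−1)^k i σ_z)/√2` on the neighbors of `a`, the graph state of the
locally complemented graph with the measured vertex removed. -/
theorem graphState_sigmaY_measurement {V : Type} [Fintype V] [DecidableEq V]
    (G : SimpleGraph V) (a : V) (k : Bool) :
    ∃ c : ℂ, ‖c‖ = 1 ∧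
      ∀ y : {v : V // v ≠ a} → Bool,
        (1 / (Real.sqrt 2 : ℂ)) *
            (graphState G (extendAt a false y)
              - bsign k * Complex.I * graphState G (extendAt a true y))
          = (c / (Real.sqrt 2 : ℂ))
            * (∏ b ∈ Finset.univ.filter fun b : {v : V // v ≠ a} => G.Adj a b.val,
                ((1 - bsign k * Complex.I * bsign (y b)) / (Real.sqrt 2 : ℂ)))
            * graphState ((localComp G a).comap (Subtype.val : {v : V // v ≠ a} → V)) y := by
  classical
  set W := {v : V // v ≠ a} with hW
  set ι : W ↪ V := ⟨Subtype.val, Subtype.val_injective⟩ with hι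
  set ε : ℂ := bsign k with hεdef
  have hε2 : ε ^ 2 = 1 := by cases k <;> simp [hεdef, bsign]
  set S : Finset W := Finset.univ.filter (fun b : W => G.Adj a b.val) with hSdef
  set d : ℕ := S.card with hd
  set r : ℂ := (Real.sqrt 2 : ℂ) with hr
  have hr0 : r ≠ 0 := by
    simp only [hr, ne_eq, Complex.ofReal_eq_zero]
    positivity
  set u : ℂ := (1 - ε * Complex.I) / r with hu
  have hunorm : ‖u‖ = 1 := by
    rw [hu, norm_div]
    have h2 : ‖(1 - ε * Complex.I)‖ = Real.sqrt 2 := by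
      cases k <;>
        · simp only [hεdef, bsign]
          norm_num
          rw [Complex.norm_def, Complex.normSq_apply]
          norm_num
          try rw [Real.sqrt_eq_sqrt_two_mul_sqrt_two]
          try norm_num [Real.sqrt_eq_iff_sq_eq]
    rw [h2, hr]
    rw [Complex.norm_real, Real.norm_eq_abs, abs_of_nonneg (Real.sqrt_nonneg 2), div_self]
    positivity
  have hu0 : u ≠ 0 := by
    intro h; rw [h] at hunorm; simp at hunorm
  refine ⟨u ^ (1 - (d : ℤ)), ?_, ?_⟩
  · rw [norm_zpow, hunorm, one_zpow]
  intro y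
  set x0 : V → Bool := extendAt a false y with hx0
  set x1 : V → Bool := extendAt a true y with hx1
  have hx0a : x0 a = false := dif_pos rfl
  have hx1a : x1 a = true := dif_pos rfl
  have hxw0 : ∀ w : W, x0 w.val = y w := fun w => dif_neg w.2
  have hxw1 : ∀ w : W, x1 w.val = y w := fun w => dif_neg w.2
  set T : Finset W := S.filter (fun b => y b = true) with hT
  set m : ℕ := T.card with hm
  have hmd : m ≤ d := Finset.card_le_card (Finset.filter_subset _ _)
  set H : SimpleGraph W := (localComp G a).comap (Subtype.val) with hH
  set P0 : ℂ := ∏ e : Sym2 W,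
    (if (Sym2.map Subtype.val e ∈ G.edgeSet ∧ ∀ v ∈ e, y v = true) then (-1:ℂ) else 1) with hP0
  have hmem : ∀ v : V, v ∈ (Finset.univ : Finset W).map ι ↔ v ≠ a := by
    intro v
    simp only [Finset.mem_map, Finset.mem_univ, true_and, hι]
    constructor
    · rintro ⟨w, rfl⟩; exact w.2
    · intro h; exact ⟨⟨v, h⟩, rfl⟩
  have hsplit1 : (Finset.univ.filter fun e : Sym2 V => a ∉ e)
      = ((Finset.univ : Finset W).map ι).sym2 := by
    ext e
    rw [Finset.mem_filter, Finset.mem_sym2_iff]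
    simp only [Finset.mem_univ, true_and, hmem]
    constructor
    · intro h v hv hva; exact h (hva ▸ hv)
    · intro h ha; exact h a ha rfl
  have hsplit2 : (Finset.univ.filter fun e : Sym2 V => a ∈ e)
      = Finset.univ.image (fun b => s(a, b)) := by
    ext e
    induction e using Sym2.ind with
    | _ b c =>
      simp only [Finset.mem_filter, Finset.mem_univ, true_and, Finset.mem_image, Sym2.mem_iff]
      constructor
      · rintro (rfl | rfl)
        exacts [⟨c, rfl⟩, ⟨b, Sym2.eq_swap⟩]
      · rintro ⟨x, hx⟩
        rcases Sym2.eq_iff.mp hx with ⟨rfl, rfl⟩ | ⟨rfl, rfl⟩ <;> simp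
  have hinj : ∀ x ∈ (Finset.univ : Finset V), ∀ z ∈ (Finset.univ : Finset V),
      s(a, x) = s(a, z) → x = z := fun x _ z _ h => Sym2.congr_right.mp h
  -- the part of the product over edges not containing a
  have hout : ∀ x : V → Bool, (∀ w : W, x w.val = y w) →
      (∏ e ∈ Finset.univ.filter (fun e : Sym2 V => a ∉ e),
        (if (e ∈ G.edgeSet ∧ ∀ v ∈ e, x v = true) then (-1:ℂ) else 1)) = P0 := by
    intro x hx
    rw [hsplit1, Finset.sym2_map, Finset.sym2_univ, Finset.prod_map]
    refine Finset.prod_congr rfl ?_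
    intro e _
    induction e using Sym2.ind with
    | _ b c =>
      refine if_congr ?_ rfl rfl
      simp only [Function.Embedding.sym2Map_apply, Sym2.map_pair_eq, hι,
        Function.Embedding.coeFn_mk, Sym2.mem_iff, forall_eq_or_imp, forall_eq, hx]
  -- the part over edges containing a, for x0
  have hin0 : (∏ e ∈ Finset.univ.filter (fun e : Sym2 V => a ∈ e),
      (if (e ∈ G.edgeSet ∧ ∀ v ∈ e, x0 v = true) then (-1:ℂ) else 1)) = 1 := by
    rw [hsplit2, Finset.prod_image hinj]
    refine Finset.prod_eq_one fun b _ => ?_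
    rw [if_neg]
    rintro ⟨-, h⟩
    have := h a (Sym2.mem_mk_left a b)
    rw [hx0a] at this
    exact Bool.false_ne_true this
  -- the part over edges containing a, for x1
  have hin1 : (∏ e ∈ Finset.univ.filter (fun e : Sym2 V => a ∈ e),
      (if (e ∈ G.edgeSet ∧ ∀ v ∈ e, x1 v = true) then (-1:ℂ) else 1)) = (-1)^m := by
    rw [hsplit2, Finset.prod_image hinj]
    have step : ∀ b : V, (if (s(a,b) ∈ G.edgeSet ∧ ∀ v ∈ s(a,b), x1 v = true)
        then (-1:ℂ) else 1) = (if (G.Adj a b ∧ x1 b = true) then (-1:ℂ) else 1) := by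
      intro b
      refine if_congr ?_ rfl rfl
      simp [SimpleGraph.mem_edgeSet, Sym2.mem_iff, forall_eq_or_imp, forall_eq, hx1a]
    rw [Finset.prod_congr rfl (fun b _ => step b)]
    rw [← Finset.mul_prod_erase Finset.univ _ (Finset.mem_univ a)]
    rw [if_neg (by simp), one_mul]
    have herase : Finset.univ.erase a = (Finset.univ : Finset W).map ι := by
      ext v; simp [hmem v]
    rw [herase, Finset.prod_map]
    have step2 : ∀ w : W, (if (G.Adj a (ι w) ∧ x1 (ι w) = true) then (-1:ℂ) else 1)
        = (if (G.Adj a w.val ∧ y w = true) then (-1:ℂ) else 1) := by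
      intro w
      refine if_congr ?_ rfl rfl
      rw [show (ι w : V) = w.val from rfl, hxw1 w]
    rw [Finset.prod_congr rfl (fun w _ => step2 w), Finset.prod_ite, Finset.prod_const,
      Finset.prod_const, one_pow, mul_one]
    congr 1
    rw [show (Finset.univ.filter fun w : W => G.Adj a w.val ∧ y w = true) = T from by
      ext w; simp [hT, hSdef, Finset.mem_filter, and_comm]]
  have hE0 : ((-1:ℂ))^(qCount G x0) = P0 := by
    rw [show qCount G x0 = (Finset.univ.filter fun e : Sym2 V =>
      e ∈ G.edgeSet ∧ ∀ v ∈ e, x0 v = true).card from rfl, signPow_eq_prod,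
      ← Finset.prod_filter_mul_prod_filter_not Finset.univ (fun e : Sym2 V => a ∈ e),
      hin0, one_mul, hout x0 hxw0]
  have hE1 : ((-1:ℂ))^(qCount G x1) = P0 * (-1)^m := by
    rw [show qCount G x1 = (Finset.univ.filter fun e : Sym2 V =>
      e ∈ G.edgeSet ∧ ∀ v ∈ e, x1 v = true).card from rfl, signPow_eq_prod,
      ← Finset.prod_filter_mul_prod_filter_not Finset.univ (fun e : Sym2 V => a ∈ e),
      hin1, hout x1 hxw1, mul_comm]
  have hEH : ((-1:ℂ))^(qCount H y) = P0 * (-1)^(m.choose 2) := by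
    rw [show qCount H y = (Finset.univ.filter fun e : Sym2 W =>
      e ∈ H.edgeSet ∧ ∀ v ∈ e, y v = true).card from rfl, signPow_eq_prod]
    have hpt : ∀ e : Sym2 W, (if (e ∈ H.edgeSet ∧ ∀ v ∈ e, y v = true) then (-1:ℂ) else 1)
        = (if (Sym2.map Subtype.val e ∈ G.edgeSet ∧ ∀ v ∈ e, y v = true) then (-1:ℂ) else 1)
          * (if (¬ e.IsDiag ∧ ∀ v ∈ e, v ∈ T) then (-1:ℂ) else 1) := by
      intro e
      induction e using Sym2.ind with
      | _ b c =>
        refine if_xor_eq ?_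
        have hadj : G.Adj b.val c.val → ¬ b = c := by
          intro h hbc
          exact G.ne_of_adj h (congrArg Subtype.val hbc)
        have hcomm : G.Adj c.val b.val ↔ G.Adj b.val c.val := G.adj_comm c.val b.val
        have hne : (b.val ≠ c.val) ↔ ¬ b = c := Subtype.coe_ne_coe
        simp only [SimpleGraph.mem_edgeSet, hH, SimpleGraph.comap_adj, localComp,
          SimpleGraph.fromRel_adj, Sym2.map_pair_eq, Sym2.mem_iff, forall_eq_or_imp,
          forall_eq, Sym2.mk_isDiag_iff, hT, hSdef, Finset.mem_filter, Finset.mem_univ,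
          true_and]
        by_cases hab : G.Adj a b.val <;> by_cases hac : G.Adj a c.val <;>
          simp only [hab, hac, true_and, false_and, and_true, and_false, if_true, if_false,
            if_pos, if_neg, not_false_iff, and_self] <;>
          simp only [Xor', xor_def] <;>
          constructor <;> intro hyp <;>
          first
            | tauto
            | (simp_all [hne, hcomm]; tauto)
    rw [Finset.prod_congr rfl (fun e _ => hpt e), Finset.prod_mul_distrib, ← hP0]
    congr 1
    rw [← signPow_eq_prod]
    congr 1
    have himg : Finset.univ.filter (fun e : Sym2 W => ¬ e.IsDiag ∧ ∀ v ∈ e, v ∈ T)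
        = T.offDiag.image Sym2.mk.uncurry := by
      ext e
      induction e using Sym2.ind with
      | _ b c =>
        simp only [Finset.mem_filter, Finset.mem_univ, true_and, Sym2.mk_isDiag_iff,
          Sym2.mem_iff, forall_eq_or_imp, forall_eq, Finset.mem_image, Finset.mem_offDiag]
        constructor
        · rintro ⟨hbc, hbT, hcT⟩
          exact ⟨(b, c), ⟨hbT, hcT, hbc⟩, rfl⟩
        · rintro ⟨⟨p, q⟩, ⟨hp, hq, hpq⟩, hmk⟩
          rcases Sym2.eq_iff.mp hmk with ⟨rfl, rfl⟩ | ⟨rfl, rfl⟩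
          · exact ⟨hpq, hp, hq⟩
          · exact ⟨Ne.symm hpq, hq, hp⟩
    rw [himg, Sym2.card_image_offDiag]
  -- cardinalities
  have herase : Finset.univ.erase a = (Finset.univ : Finset W).map ι := by
    ext v; simp [hmem v]
  have hcardW : Fintype.card W + 1 = Fintype.card V := by
    have h5 : Fintype.card W = (Finset.univ.erase a).card := by
      rw [herase, Finset.card_map, Finset.card_univ]
    rw [h5, Finset.card_erase_add_one (Finset.mem_univ a), Finset.card_univ]
  set rw2 : ℂ := ((Real.sqrt (2 ^ Fintype.card W) : ℝ) : ℂ) with hrw2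
  have hrn : ((Real.sqrt (2 ^ Fintype.card V) : ℝ) : ℂ) = r * rw2 := by
    rw [← hcardW, pow_succ, Real.sqrt_mul (by positivity)]
    push_cast
    rw [hr, hrw2]
    push_cast
    ring
  -- the product of correction factors
  have hmul : (1 + ε*Complex.I) = (1 - ε*Complex.I) * (ε*Complex.I) := by
    linear_combination Complex.I^2*hε2 + Complex.I_sq
  have hv : (1 + ε*Complex.I)/r = u * (ε*Complex.I) := by
    rw [hu, div_mul_eq_mul_div, ← hmul]
  have hPi : (∏ b ∈ S, ((1 - ε*Complex.I*bsign (y b))/r)) = u^m * (ε*Complex.I)^m * u^(d-m) := by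
    have hbody : ∀ b ∈ S, ((1 - ε*Complex.I*bsign (y b))/r)
        = if y b = true then u*(ε*Complex.I) else u := by
      intro b _
      cases hyb : y b
      · simp only [hyb, if_false, bsign, Bool.false_eq_true, mul_one, hu]
      · simp only [hyb, if_true, bsign]
        rw [← hv]
        ring_nf
    rw [Finset.prod_congr rfl hbody, Finset.prod_ite, Finset.prod_const, Finset.prod_const]
    have hTS : T ⊆ S := by rw [hT]; exact Finset.filter_subset _ _
    have hdm : (S.filter (fun b => ¬ y b = true)).card = d - m := by
      have h8 : (S.filter (fun b => ¬ y b = true)).card = (S \ T).card := by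
        congr 1
        ext w
        simp [hT]
        tauto
      rw [h8, Finset.card_sdiff_of_subset hTS]
    rw [hdm, ← hT, ← hm, mul_pow]
  have hur : u * r = 1 - ε*Complex.I := by
    rw [hu]; field_simp
  have hcu : u ^ (1 - (d:ℤ)) * u ^ (d - m) * u ^ m = u := by
    rw [mul_assoc, ← pow_add, Nat.sub_add_cancel hmd, ← zpow_natCast u d, ← zpow_add₀ hu0]
    norm_num
  simp only [graphState]
  rw [hE0, hE1, hEH, hrn, hPi]
  linear_combination (P0/(r^2*rw2)) * (key_ident ε hε2 m)
    - ((ε*Complex.I)^m * P0 * (-1)^(m.choose 2)/(r*rw2)) * hcu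
    - ((ε*Complex.I)^m * P0 * (-1)^(m.choose 2)/(r*rw2)) * hu
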